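/- arXiv:2111.06846 — 2 statements merged into one kernel-verified Lean document; each statement's English description precedes it below -/
import Mathlib

section
/- Let μ and ν be Borel probability measures on ℝ with finite first moments and distribution functions F_μ and F_ν. Then the L¹-Wasserstein distance satisfies W₁(μ, ν) = ∫_ℝ |F_μ(x) − F_ν(x)| dx. -/
open MeasureTheory Set ENNReal

/-- The L¹-Wasserstein (Kantorovich) distance between two Borel measures on ℝ,
defined as the infimum over all couplings of the expected absolute difference. -/
noncomputable def W1 (μ ν : Measure ℝ) : ℝ≥0∞ :=
  ⨅ (γ : Measure (ℝ × ℝ)) (_ : γ.map Prod.fst = μ ∧ γ.map Prod.snd = ν),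
    ∫⁻ p, ENNReal.ofReal |p.1 - p.2| ∂γ

/-!
Writing `|x - y|` as the length of the interval between `x` and `y` and applying Tonelli, the cost
of a coupling `γ` is `∫ (γ{x ≤ t < y} + γ{y ≤ t < x}) dt`. Since
`F_μ(t) - F_ν(t) = γ{x ≤ t < y} - γ{y ≤ t < x}`, the integrand dominates `|F_μ(t) - F_ν(t)|`.
Equality holds for the comonotone coupling `s ↦ (F_μ⁻¹(s), F_ν⁻¹(s))`, `s` uniform on `(0, 1)`,
under which one of the two events is null for each `t`. Finite first moments make the common value
finite, so it is the `ofReal` of the Bochner integral.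
-/

open ProbabilityTheory

lemma ofReal_abs_sub_eq (x y : ℝ) :
    ENNReal.ofReal |x - y| = ENNReal.ofReal (x - y) + ENNReal.ofReal (y - x) := by
  rcases le_total x y with h | h
  · rw [abs_of_nonpos (sub_nonpos.2 h), neg_sub, ofReal_of_nonpos (sub_nonpos.2 h), zero_add]
  · rw [abs_of_nonneg (sub_nonneg.2 h), ofReal_of_nonpos (sub_nonpos.2 h), add_zero]

lemma ofReal_abs_measureReal_sub_le {α : Type*} [MeasurableSpace α] (γ : Measure α)
    [IsFiniteMeasure γ] (s t : Set α) :
    ENNReal.ofReal |γ.real s - γ.real t| ≤ γ (s \ t) + γ (t \ s) := by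
  have h : |γ.real s - γ.real t| ≤ γ.real (s \ t) + γ.real (t \ s) :=
    abs_sub_le_iff.2 ⟨(le_measureReal_sdiff).trans (le_add_of_nonneg_right measureReal_nonneg),
      (le_measureReal_sdiff).trans (le_add_of_nonneg_left measureReal_nonneg)⟩
  calc ENNReal.ofReal |γ.real s - γ.real t|
      ≤ ENNReal.ofReal (γ.real (s \ t) + γ.real (t \ s)) := ofReal_le_ofReal h
    _ = γ (s \ t) + γ (t \ s) := by
      rw [ofReal_add measureReal_nonneg measureReal_nonneg, ofReal_measureReal, ofReal_measureReal]

lemma measurableSet_setOf_le_and_lt {α : Type*} [MeasurableSpace α] {f g : α → ℝ}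
    (hf : Measurable f) (hg : Measurable g) :
    MeasurableSet {q : α × ℝ | f q.1 ≤ q.2 ∧ q.2 < g q.1} :=
  (measurableSet_le (hf.comp measurable_fst) measurable_snd).inter
    (measurableSet_lt measurable_snd (hg.comp measurable_fst))

lemma lintegral_volume_Ico_eq {α : Type*} [MeasurableSpace α] (γ : Measure α) [SFinite γ]
    {f g : α → ℝ} (hf : Measurable f) (hg : Measurable g) :
    ∫⁻ a, volume (Ico (f a) (g a)) ∂γ = ∫⁻ t, γ {a | f a ≤ t ∧ t < g a} :=
  (Measure.prod_apply (measurableSet_setOf_le_and_lt hf hg)).symm.trans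
    (Measure.prod_apply_symm (measurableSet_setOf_le_and_lt hf hg))

lemma lintegral_ofReal_abs_sub_eq {α : Type*} [MeasurableSpace α] (γ : Measure α) [SFinite γ]
    {f g : α → ℝ} (hf : Measurable f) (hg : Measurable g) :
    ∫⁻ a, ENNReal.ofReal |f a - g a| ∂γ
      = ∫⁻ t, (γ {a | f a ≤ t ∧ t < g a} + γ {a | g a ≤ t ∧ t < f a}) := by
  simp_rw [ofReal_abs_sub_eq]
  rw [lintegral_add_left (by fun_prop),
    lintegral_add_left (f := fun t ↦ γ {a | f a ≤ t ∧ t < g a})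
      (measurable_measure_prodMk_right (measurableSet_setOf_le_and_lt hf hg))]
  simp_rw [← Real.volume_Ico]
  rw [lintegral_volume_Ico_eq γ hg hf, lintegral_volume_Ico_eq γ hf hg, add_comm]

lemma lintegral_ofReal_abs_cdf_sub_le_of_map (μ ν : Measure ℝ) [IsProbabilityMeasure μ]
    [IsProbabilityMeasure ν] (γ : Measure (ℝ × ℝ)) [IsFiniteMeasure γ]
    (hγ₁ : γ.map Prod.fst = μ) (hγ₂ : γ.map Prod.snd = ν) :
    ∫⁻ t, ENNReal.ofReal |cdf μ t - cdf ν t| ≤ ∫⁻ p, ENNReal.ofReal |p.1 - p.2| ∂γ := by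
  rw [lintegral_ofReal_abs_sub_eq γ measurable_fst measurable_snd]
  refine lintegral_mono fun t ↦ ?_
  rw [cdf_eq_real, cdf_eq_real, ← hγ₁, ← hγ₂,
    map_measureReal_apply measurable_fst measurableSet_Iic,
    map_measureReal_apply measurable_snd measurableSet_Iic]
  convert ofReal_abs_measureReal_sub_le γ _ _ using 3 <;> ext p <;> simp [not_le]

lemma lintegral_ofReal_abs_sub_le_of_map (μ ν : Measure ℝ) (γ : Measure (ℝ × ℝ))
    (hγ₁ : γ.map Prod.fst = μ) (hγ₂ : γ.map Prod.snd = ν) :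
    ∫⁻ p, ENNReal.ofReal |p.1 - p.2| ∂γ
      ≤ ∫⁻ x, ENNReal.ofReal |x| ∂μ + ∫⁻ x, ENNReal.ofReal |x| ∂ν := by
  have habs : Measurable fun x : ℝ ↦ ENNReal.ofReal |x| := by fun_prop
  rw [← hγ₁, ← hγ₂, lintegral_map habs measurable_fst, lintegral_map habs measurable_snd,
    ← lintegral_add_left (by fun_prop : Measurable fun p : ℝ × ℝ ↦ ENNReal.ofReal |p.1|)]
  refine lintegral_mono fun p ↦ ?_
  rw [← ofReal_add (abs_nonneg _) (abs_nonneg _)]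
  exact ofReal_le_ofReal (abs_sub _ _)

lemma volume_Ioc_inter_Ioo_zero_one {a b : ℝ} (ha : 0 ≤ a) (hb : b ≤ 1) :
    volume (Ioc a b ∩ Ioo 0 1) = ENNReal.ofReal (b - a) := by
  refine le_antisymm ((measure_mono inter_subset_left).trans_eq Real.volume_Ioc) ?_
  rw [← Real.volume_Ioo]
  exact measure_mono fun s hs ↦ ⟨Ioo_subset_Ioc_self hs, ha.trans_lt hs.1, hs.2.trans_le hb⟩

section quantile

variable (μ : Measure ℝ)

noncomputable def quantile (s : ℝ) : ℝ :=
  if s ∈ Ioo 0 1 then sInf {x | s ≤ cdf μ x} else 0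

variable {μ} in
lemma quantile_le_iff {s : ℝ} (hs : s ∈ Ioo 0 1) (t : ℝ) :
    quantile μ s ≤ t ↔ s ≤ cdf μ t := by
  have hne : {x | s ≤ cdf μ x}.Nonempty :=
    (((tendsto_cdf_atTop μ).eventually_const_lt hs.2).exists).imp fun _ ↦ le_of_lt
  have hbdd : BddBelow {x | s ≤ cdf μ x} := by
    obtain ⟨x₀, hx₀⟩ := ((tendsto_cdf_atBot μ).eventually_lt_const hs.1).exists
    exact ⟨x₀, fun x hx ↦ le_of_not_gt fun hlt ↦ (hx.trans (monotone_cdf μ hlt.le)).not_gt hx₀⟩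
  rw [quantile, if_pos hs]
  refine ⟨fun h ↦ ?_, fun h ↦ csInf_le hbdd h⟩
  -- `cdf μ` is right-continuous and `≥ s` at every point above the infimum.
  refine ge_of_tendsto (((cdf μ).right_continuous t).mono Ioi_subset_Ici_self) ?_
  filter_upwards [self_mem_nhdsWithin] with u hu
  obtain ⟨x, hx, hxu⟩ := (csInf_lt_iff hbdd hne).1 (h.trans_lt hu)
  exact hx.trans (monotone_cdf μ hxu.le)

lemma measurable_quantile : Measurable (quantile μ) := by
  refine measurable_of_Iic fun t ↦ ?_
  have : quantile μ ⁻¹' Iic t = (Iic (cdf μ t) ∩ Ioo 0 1) ∪ ((Ioo 0 1)ᶜ ∩ {_s | 0 ≤ t}) := by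
    ext s
    by_cases hs : s ∈ Ioo 0 1
    · simp [hs, quantile_le_iff hs]
    · simp [hs, quantile]
  rw [this]
  exact (measurableSet_Iic.inter measurableSet_Ioo).union
    (measurableSet_Ioo.compl.inter (MeasurableSet.const _))

lemma map_quantile [IsProbabilityMeasure μ] :
    (volume.restrict (Ioo 0 1)).map (quantile μ) = μ := by
  refine Measure.ext_of_Iic _ _ fun t ↦ ?_
  have : quantile μ ⁻¹' Iic t ∩ Ioo 0 1 = Ioc 0 (cdf μ t) ∩ Ioo 0 1 := by
    ext s
    by_cases hs : s ∈ Ioo 0 1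
    · simp [hs, quantile_le_iff hs, hs.1]
    · simp [hs]
  rw [Measure.map_apply (measurable_quantile μ) measurableSet_Iic,
    Measure.restrict_apply' measurableSet_Ioo, this,
    volume_Ioc_inter_Ioo_zero_one le_rfl (cdf_le_one μ t), sub_zero, ofReal_cdf]

variable (ν : Measure ℝ)

lemma restrict_Ioo_setOf_quantile_le_and_lt (t : ℝ) :
    volume.restrict (Ioo 0 1) {s | quantile μ s ≤ t ∧ t < quantile ν s}
      = ENNReal.ofReal (cdf μ t - cdf ν t) := by
  have : {s | quantile μ s ≤ t ∧ t < quantile ν s} ∩ Ioo 0 1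
      = Ioc (cdf ν t) (cdf μ t) ∩ Ioo 0 1 := by
    ext s
    by_cases hs : s ∈ Ioo 0 1
    · simp [hs, quantile_le_iff hs, ← not_le, and_comm]
    · simp [hs]
  rw [Measure.restrict_apply' measurableSet_Ioo, this,
    volume_Ioc_inter_Ioo_zero_one (cdf_nonneg ν t) (cdf_le_one μ t)]

end quantile

noncomputable def quantileCoupling (μ ν : Measure ℝ) : Measure (ℝ × ℝ) :=
  (volume.restrict (Ioo 0 1)).map fun s ↦ (quantile μ s, quantile ν s)

section quantileCoupling

variable (μ ν : Measure ℝ)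

lemma measurable_quantile_prodMk : Measurable fun s ↦ (quantile μ s, quantile ν s) :=
  (measurable_quantile μ).prodMk (measurable_quantile ν)

lemma quantileCoupling_map_fst [IsProbabilityMeasure μ] :
    (quantileCoupling μ ν).map Prod.fst = μ := by
  rw [quantileCoupling, Measure.map_map measurable_fst (measurable_quantile_prodMk μ ν)]
  exact map_quantile μ

lemma quantileCoupling_map_snd [IsProbabilityMeasure ν] :
    (quantileCoupling μ ν).map Prod.snd = ν := by
  rw [quantileCoupling, Measure.map_map measurable_snd (measurable_quantile_prodMk μ ν)]
  exact map_quantile ν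

lemma lintegral_ofReal_abs_sub_quantileCoupling :
    ∫⁻ p, ENNReal.ofReal |p.1 - p.2| ∂(quantileCoupling μ ν)
      = ∫⁻ t, ENNReal.ofReal |cdf μ t - cdf ν t| := by
  rw [quantileCoupling, lintegral_map (by fun_prop) (measurable_quantile_prodMk μ ν),
    lintegral_ofReal_abs_sub_eq _ (measurable_quantile μ) (measurable_quantile ν)]
  simp_rw [restrict_Ioo_setOf_quantile_le_and_lt, ← ofReal_abs_sub_eq]

end quantileCoupling

/-- In dimension one, the L¹-Wasserstein distance between two probability measures with
finite first moments equals the L¹ distance between their cumulative distribution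
functions: `W₁(μ, ν) = ∫ |F_μ(x) − F_ν(x)| dx`. -/
theorem stmt2 (μ ν : Measure ℝ) [IsProbabilityMeasure μ] [IsProbabilityMeasure ν]
    (hμ : Integrable (fun x : ℝ => |x|) μ) (hν : Integrable (fun x : ℝ => |x|) ν) :
    W1 μ ν = ENNReal.ofReal
      (∫ x : ℝ, |(μ (Set.Iic x)).toReal - (ν (Set.Iic x)).toReal|) := by
  have hW : W1 μ ν = ∫⁻ t, ENNReal.ofReal |cdf μ t - cdf ν t| := by
    refine le_antisymm (iInf₂_le_of_le _ ⟨quantileCoupling_map_fst μ ν,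
      quantileCoupling_map_snd μ ν⟩ (lintegral_ofReal_abs_sub_quantileCoupling μ ν).le)
      (le_iInf₂ fun γ hγ ↦ ?_)
    have : IsProbabilityMeasure (γ.map Prod.fst) := hγ.1 ▸ ‹_›
    have : IsProbabilityMeasure γ := Measure.isProbabilityMeasure_of_map Prod.fst
    exact lintegral_ofReal_abs_cdf_sub_le_of_map μ ν γ hγ.1 hγ.2
  have hfin : ∫⁻ t, ENNReal.ofReal |cdf μ t - cdf ν t| ≠ ∞ := by
    rw [← lintegral_ofReal_abs_sub_quantileCoupling]
    exact ne_top_of_le_ne_top (add_ne_top.2 ⟨hμ.lintegral_lt_top.ne, hν.lintegral_lt_top.ne⟩)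
      (lintegral_ofReal_abs_sub_le_of_map μ ν _ (quantileCoupling_map_fst μ ν)
        (quantileCoupling_map_snd μ ν))
  simp only [← measureReal_def, ← cdf_eq_real]
  have hmeas : Measurable fun t ↦ |cdf μ t - cdf ν t| :=
    ((monotone_cdf μ).measurable.sub (monotone_cdf ν).measurable).abs
  rw [integral_eq_lintegral_of_nonneg_ae (ae_of_all _ fun _ ↦ abs_nonneg _)
    hmeas.aestronglyMeasurable, ofReal_toReal hfin, hW]
end

section
/- Let f_V(v; β) := (2/π) sin(πβ/2) · v^{β−1} / (1 + v^{2β} + 2 v^β cos(πβ/2)) for v > 0 and 0 < β < 2. Then for every v ∈ (0,1) and every γ ∈ (0,1), E(v) := ∫₀^v u f_V(u;β) du ≥ c v^{1+β} for a constant c > 0 depending only on β and γ. -/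
open MeasureTheory Real Set

/-!
For `u ∈ (0, 1]` put `x = u ^ β ∈ (0, 1]`; then `u * fV β u = (2/π) sin(πβ/2) x / D` with
`D = 1 + x² + 2x cos(πβ/2) ∈ [sin²(πβ/2), 4]`. The upper bound on `D` gives
`u * fV β u ≥ (sin(πβ/2) / (2π)) u ^ β`, which integrates to a multiple of `v ^ (1 + β)`;
the lower bound on `D` makes the integrand integrable.
-/

/-- The mixing density of the Linnik distribution of index `β ∈ (0,2)` as a scale mixture
of Laplace densities. -/
noncomputable def fV (β v : ℝ) : ℝ :=
  (2 / Real.pi) * Real.sin (Real.pi * β / 2) * v ^ (β - 1) /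
    (1 + v ^ (2 * β) + 2 * v ^ β * Real.cos (Real.pi * β / 2))

lemma sin_sq_le_one_add_sq_add_two_mul_cos (θ x : ℝ) :
    sin θ ^ 2 ≤ 1 + x ^ 2 + 2 * x * cos θ := by
  nlinarith [sq_nonneg (x + cos θ), sin_sq_add_cos_sq θ]

lemma one_add_sq_add_two_mul_cos_le_four (θ : ℝ) {x : ℝ} (hx0 : 0 ≤ x) (hx1 : x ≤ 1) :
    1 + x ^ 2 + 2 * x * cos θ ≤ 4 := by
  nlinarith [cos_le_one θ]

lemma sin_pi_mul_div_two_pos {β : ℝ} (hβ0 : 0 < β) (hβ2 : β < 2) : 0 < sin (π * β / 2) :=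
  sin_pos_of_pos_of_lt_pi (by positivity) (by nlinarith [pi_pos])

lemma mul_fV_eq (β : ℝ) {u : ℝ} (hu : 0 < u) :
    u * fV β u = 2 / π * sin (π * β / 2) * u ^ β /
      (1 + (u ^ β) ^ 2 + 2 * u ^ β * cos (π * β / 2)) := by
  have hmul : u * u ^ (β - 1) = u ^ β := by
    rw [mul_comm, ← rpow_add_one hu.ne', sub_add_cancel]
  rw [fV, ← rpow_natCast, ← rpow_mul hu.le, mul_comm β, ← hmul]
  push_cast
  ring

lemma integrableOn_rpow_Ioc {β : ℝ} (hβ : -1 < β) {v : ℝ} (hv : 0 ≤ v) :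
    IntegrableOn (fun u ↦ u ^ β) (Ioc 0 v) :=
  (intervalIntegrable_iff_integrableOn_Ioc_of_le hv).mp
    (intervalIntegral.intervalIntegrable_rpow' hβ)

section

variable {β : ℝ} (hβ0 : 0 < β) (hβ2 : β < 2)
include hβ0 hβ2

lemma mul_fV_nonneg {u : ℝ} (hu : 0 < u) : 0 ≤ u * fV β u := by
  have hs := sin_pi_mul_div_two_pos hβ0 hβ2
  have hx := rpow_pos_of_pos hu β
  rw [mul_fV_eq β hu]
  exact div_nonneg (by positivity)
    ((sq_nonneg _).trans (sin_sq_le_one_add_sq_add_two_mul_cos (π * β / 2) (u ^ β)))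

lemma mul_fV_le {u : ℝ} (hu : 0 < u) :
    u * fV β u ≤ 2 / (π * sin (π * β / 2)) * u ^ β := by
  have hs := sin_pi_mul_div_two_pos hβ0 hβ2
  have hD := sin_sq_le_one_add_sq_add_two_mul_cos (π * β / 2) (u ^ β)
  have hx := rpow_pos_of_pos hu β
  rw [mul_fV_eq β hu]
  calc 2 / π * sin (π * β / 2) * u ^ β / (1 + (u ^ β) ^ 2 + 2 * u ^ β * cos (π * β / 2))
      ≤ 2 / π * sin (π * β / 2) * u ^ β / sin (π * β / 2) ^ 2 :=
        div_le_div_of_nonneg_left (by positivity) (by positivity) hD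
    _ = 2 / (π * sin (π * β / 2)) * u ^ β := by field_simp

lemma le_mul_fV {u : ℝ} (hu0 : 0 < u) (hu1 : u ≤ 1) :
    sin (π * β / 2) / (2 * π) * u ^ β ≤ u * fV β u := by
  have hs := sin_pi_mul_div_two_pos hβ0 hβ2
  have hx := rpow_pos_of_pos hu0 β
  have hD := sin_sq_le_one_add_sq_add_two_mul_cos (π * β / 2) (u ^ β)
  have hD4 := one_add_sq_add_two_mul_cos_le_four (π * β / 2) hx.le
    (rpow_le_one hu0.le hu1 hβ0.le)
  rw [mul_fV_eq β hu0]
  calc sin (π * β / 2) / (2 * π) * u ^ β = 2 / π * sin (π * β / 2) * u ^ β / 4 := by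
        field_simp; ring
    _ ≤ _ := div_le_div_of_nonneg_left (by positivity) ((pow_pos hs 2).trans_le hD) hD4

lemma integrableOn_mul_fV {v : ℝ} (hv : 0 ≤ v) :
    IntegrableOn (fun u ↦ u * fV β u) (Ioc 0 v) := by
  refine ((integrableOn_rpow_Ioc (by linarith : -1 < β) hv).const_mul
    (2 / (π * sin (π * β / 2)))).mono' ?_ ?_
  · exact (by unfold fV; fun_prop : Measurable fun u ↦ u * fV β u).aestronglyMeasurable
  · filter_upwards [ae_restrict_mem measurableSet_Ioc] with u hu
    rw [norm_of_nonneg (mul_fV_nonneg hβ0 hβ2 hu.1)]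
    exact mul_fV_le hβ0 hβ2 hu.1

end

theorem stmt8_general (β : ℝ) (hβ0 : 0 < β) (hβ2 : β < 2) :
    ∃ c : ℝ, 0 < c ∧ ∀ v : ℝ, 0 < v → v < 1 →
      c * v ^ (1 + β) ≤ ∫ u in Set.Ioc (0:ℝ) v, u * fV β u := by
  have hs := sin_pi_mul_div_two_pos hβ0 hβ2
  refine ⟨sin (π * β / 2) / (2 * π) / (1 + β), by positivity, fun v hv0 hv1 ↦ ?_⟩
  have hrpow_integral : ∫ u in Ioc 0 v, u ^ β = v ^ (1 + β) / (1 + β) := by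
    rw [← intervalIntegral.integral_of_le hv0.le, integral_rpow (Or.inl (by linarith)),
      zero_rpow (by linarith), add_comm β]
    ring
  calc sin (π * β / 2) / (2 * π) / (1 + β) * v ^ (1 + β)
      = ∫ u in Ioc 0 v, sin (π * β / 2) / (2 * π) * u ^ β := by
        rw [integral_const_mul, hrpow_integral]; ring
    _ ≤ ∫ u in Ioc 0 v, u * fV β u :=
        setIntegral_mono_on ((integrableOn_rpow_Ioc (by linarith : -1 < β) hv0.le).const_mul _)
          (integrableOn_mul_fV hβ0 hβ2 hv0.le) measurableSet_Ioc
          fun u hu ↦ le_mul_fV hβ0 hβ2 hu.1 (hu.2.trans hv1.le)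

/-- Lower bound on the truncated first moment of the Linnik mixing density: for every
`γ ∈ (0,1)` there is `c > 0` (depending only on `β` and `γ`) with
`E(v) = ∫₀^v u f_V(u;β) du ≥ c v^{1+β}` for all `v ∈ (0,1)`. -/
theorem stmt8 (β : ℝ) (hβ0 : 0 < β) (hβ2 : β < 2) (γ : ℝ) (hγ0 : 0 < γ) (hγ1 : γ < 1) :
    ∃ c : ℝ, 0 < c ∧ ∀ v : ℝ, 0 < v → v < 1 →
      c * v ^ (1 + β) ≤ ∫ u in Set.Ioc (0:ℝ) v, u * fV β u :=
  stmt8_general β hβ0 hβ2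
end
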